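/- arXiv:2407.19027 — 2 statements merged into one kernel-verified Lean document; each statement's English description precedes it below -/
import Mathlib

section
/- In the coupon collector's problem with n coupons, for any ε ∈ (0,1), the probability that the number τ of draws needed to collect all n coupons satisfies (1-ε)·n·log n ≤ τ ≤ (1+ε)·n·log n tends to 1 as n → ∞. -/
open MeasureTheory ProbabilityTheory Filter


lemma hasSum_succ_geom {q : ℝ} (h0 : 0 ≤ q) (h1 : q < 1) :
    HasSum (fun m : ℕ => ((m : ℝ) + 1) * q ^ m) (1 / (1 - q) ^ 2) := by
  have hq : ‖q‖ < 1 := by rwa [Real.norm_eq_abs, abs_of_nonneg h0]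
  have A := hasSum_coe_mul_geometric_of_norm_lt_one hq
  have B := hasSum_geometric_of_lt_one h0 h1
  have hp : (1 : ℝ) - q ≠ 0 := by linarith
  have hval : q / (1 - q) ^ 2 + (1 - q)⁻¹ = 1 / (1 - q) ^ 2 := by field_simp; ring
  have C := A.add B
  rw [hval] at C
  exact C.congr_fun fun m => by ring

lemma summable_sq_geom {q : ℝ} (h0 : 0 ≤ q) (h1 : q < 1) :
    Summable (fun m : ℕ => ((m : ℝ) + 1) * ((m : ℝ) + 2) * q ^ m) := by
  have hq : ‖q‖ < 1 := by rwa [Real.norm_eq_abs, abs_of_nonneg h0]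
  have s2 : Summable (fun m : ℕ => ((m : ℝ) ^ 2) * q ^ m) := by
    simpa using summable_pow_mul_geometric_of_norm_lt_one 2 hq
  have s1 : Summable (fun m : ℕ => (m : ℝ) * q ^ m) := by
    simpa using summable_pow_mul_geometric_of_norm_lt_one 1 hq
  have s0 : Summable (fun m : ℕ => q ^ m) := summable_geometric_of_lt_one h0 h1
  exact ((s2.add (s1.mul_left 3)).add (s0.mul_left 2)).congr fun m => by ring

lemma tsum_sq_geom {q : ℝ} (h0 : 0 ≤ q) (h1 : q < 1) :
    ∑' m : ℕ, ((m : ℝ) + 1) * ((m : ℝ) + 2) * q ^ m = 2 / (1 - q) ^ 3 := by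
  have hp : (0 : ℝ) < 1 - q := by linarith
  set F : ℕ → ℝ := fun m => ((m : ℝ) + 1) * ((m : ℝ) + 2) * q ^ m with hF
  have hS : Summable F := summable_sq_geom h0 h1
  have hG : Summable (fun m => F (m + 1)) := (summable_nat_add_iff 1).2 hS
  have hH : Summable (fun m => q * F m) := hS.mul_left q
  set S := ∑' m, F m with hSdef
  have key : S - q * S = 2 + q * (2 * (1 / (1 - q) ^ 2) + 2 * (1 - q)⁻¹) := by
    have e1 : S = F 0 + ∑' m, F (m + 1) := Summable.tsum_eq_zero_add hS
    have e2 : q * S = ∑' m, q * F m := (tsum_mul_left).symm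
    rw [e2, e1]
    have e3 : F 0 + ∑' m, F (m + 1) - ∑' m, q * F m
        = F 0 + ∑' m, (F (m + 1) - q * F m) := by
      rw [add_sub_assoc, ← Summable.tsum_sub hG hH]
    rw [e3]
    have hF0 : F 0 = 2 := by simp [hF]
    rw [hF0]
    congr 1
    have e4 : ∀ m : ℕ, F (m + 1) - q * F m
        = (2 * q) * (((m : ℝ) + 1) * q ^ m) + (2 * q) * q ^ m := by
      intro m
      simp only [hF]
      push_cast
      ring
    rw [tsum_congr e4, Summable.tsum_add (((hasSum_succ_geom h0 h1).summable).mul_left _)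
      ((summable_geometric_of_lt_one h0 h1).mul_left _), tsum_mul_left, tsum_mul_left,
      (hasSum_succ_geom h0 h1).tsum_eq, tsum_geometric_of_lt_one h0 h1]
    ring
  have hne : (1 : ℝ) - q ≠ 0 := ne_of_gt hp
  have : (1 - q) * S = 2 / (1 - q) ^ 2 := by
    rw [sub_mul, one_mul, key]
    field_simp
    ring
  have := this
  field_simp at this
  rw [eq_div_iff (by positivity)]
  nlinarith [this]

lemma geom_nu (ν : Measure ℕ) (p : ℝ) (hp0 : 0 < p) (hp1 : p ≤ 1)
    (hν0 : ν {0} = 0) (hνs : ∀ m : ℕ, ν {m + 1} = ENNReal.ofReal (p * (1 - p) ^ m))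
    (h : ℕ → ℝ) (hnn : ∀ k, 0 ≤ h k)
    (hs : Summable (fun m : ℕ => h (m + 1) * (p * (1 - p) ^ m))) :
    Integrable h ν ∧ ∫ k, h k ∂ν = ∑' m : ℕ, h (m + 1) * (p * (1 - p) ^ m) := by
  have hpq : ∀ m : ℕ, 0 ≤ p * (1 - p) ^ m := by
    intro m; apply mul_nonneg hp0.le; apply pow_nonneg; linarith
  have hmeash : AEStronglyMeasurable h ν := measurable_from_nat.aestronglyMeasurable
  have hIntν : Integrable h ν := by
    refine ⟨hmeash, ?_⟩
    rw [hasFiniteIntegral_iff_ofReal (Filter.Eventually.of_forall hnn), lintegral_countable',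
      tsum_eq_zero_add' ENNReal.summable]
    have e1 : ∀ m : ℕ, ENNReal.ofReal (h (m + 1)) * ν {m + 1}
        = ENNReal.ofReal (h (m + 1) * (p * (1 - p) ^ m)) := by
      intro m
      rw [hνs m, ← ENNReal.ofReal_mul (hnn _)]
    rw [hν0]
    simp only [mul_zero, zero_add]
    rw [tsum_congr e1, ← ENNReal.ofReal_tsum_of_nonneg (fun m => mul_nonneg (hnn _) (hpq m)) hs]
    exact ENNReal.ofReal_lt_top
  refine ⟨hIntν, ?_⟩
  rw [integral_countable' hIntν]
  have hf1 : (fun m : ℕ => (ν {m + 1}).toReal • h (m + 1))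
      = fun m => h (m + 1) * (p * (1 - p) ^ m) := by
    funext m
    rw [hνs m, ENNReal.toReal_ofReal (hpq m), smul_eq_mul, mul_comm]
  have hsf : Summable (fun m : ℕ => (ν {m + 1}).toReal • h (m + 1)) := by
    rw [hf1]; exact hs
  rw [tsum_eq_zero_add' (f := fun k : ℕ => ν.real {k} • h k) hsf, measureReal_def, hν0]
  simp only [ENNReal.toReal_zero, zero_smul, zero_add]
  exact congrArg tsum hf1

lemma geom_aux {Ωt : Type*} [MeasurableSpace Ωt] (μ : Measure Ωt)
    (X : Ωt → ℕ) (hX : Measurable X) (p : ℝ) (hp0 : 0 < p) (hp1 : p ≤ 1)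
    (h0 : μ {ω | X ω = 0} = 0)
    (hpmf : ∀ k : ℕ, 1 ≤ k → μ {ω | X ω = k} = ENNReal.ofReal (p * (1 - p) ^ (k - 1)))
    (h : ℕ → ℝ) (hnn : ∀ k, 0 ≤ h k)
    (hs : Summable (fun m : ℕ => h (m + 1) * (p * (1 - p) ^ m))) :
    Integrable (fun ω => h (X ω)) μ ∧
      ∫ ω, h (X ω) ∂μ = ∑' m : ℕ, h (m + 1) * (p * (1 - p) ^ m) := by
  have hνk : ∀ k : ℕ, μ.map X {k} = μ {ω | X ω = k} := by
    intro k
    rw [Measure.map_apply hX (measurableSet_singleton k)]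
    rfl
  have hν0 : μ.map X {0} = 0 := by rw [hνk]; exact h0
  have hνs : ∀ m : ℕ, μ.map X {m + 1} = ENNReal.ofReal (p * (1 - p) ^ m) := by
    intro m
    rw [hνk, hpmf (m + 1) (Nat.le_add_left 1 m)]
    simp
  obtain ⟨hInt, hval⟩ := geom_nu (μ.map X) p hp0 hp1 hν0 hνs h hnn hs
  have hmeash : AEStronglyMeasurable h (μ.map X) := measurable_from_nat.aestronglyMeasurable
  refine ⟨(integrable_map_measure hmeash hX.aemeasurable).mp hInt, ?_⟩
  rw [← hval, integral_map hX.aemeasurable hmeash]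

lemma geom_moments {Ωt : Type*} [MeasurableSpace Ωt] (μ : Measure Ωt) [IsProbabilityMeasure μ]
    (X : Ωt → ℕ) (hX : Measurable X) (p : ℝ) (hp0 : 0 < p) (hp1 : p ≤ 1)
    (h0 : μ {ω | X ω = 0} = 0)
    (hpmf : ∀ k : ℕ, 1 ≤ k → μ {ω | X ω = k} = ENNReal.ofReal (p * (1 - p) ^ (k - 1))) :
    MemLp (fun ω => (X ω : ℝ)) 2 μ ∧ (∫ ω, (X ω : ℝ) ∂μ) = 1 / p ∧
      variance (fun ω => (X ω : ℝ)) μ ≤ 1 / p ^ 2 := by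
  have hq0 : (0 : ℝ) ≤ 1 - p := by linarith
  have hq1 : 1 - p < 1 := by linarith
  have hSgeom := hasSum_succ_geom hq0 hq1
  have hpp : (1 : ℝ) - (1 - p) = p := by ring
  rw [hpp] at hSgeom
  -- first moment
  have hs1 : HasSum (fun m : ℕ => ((m + 1 : ℕ) : ℝ) * (p * (1 - p) ^ m)) (1 / p) := by
    have := hSgeom.mul_left p
    have hval : p * (1 / p ^ 2) = 1 / p := by field_simp
    rw [hval] at this
    exact this.congr_fun fun m => by push_cast; ring
  obtain ⟨hInt1, hE1⟩ := geom_aux μ X hX p hp0 hp1 h0 hpmf (fun k => (k : ℝ))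
    (fun k => Nat.cast_nonneg k) hs1.summable
  rw [hs1.tsum_eq] at hE1
  -- second moment
  have hsq : Summable (fun m : ℕ => ((m + 1 : ℕ) : ℝ) ^ 2 * (p * (1 - p) ^ m)) := by
    have := (summable_sq_geom hq0 hq1).mul_left p
    apply Summable.of_nonneg_of_le (fun m => by positivity) ?_ this
    intro m
    have hqm : (0 : ℝ) ≤ (1 - p) ^ m := pow_nonneg hq0 m
    have : ((m + 1 : ℕ) : ℝ) ^ 2 ≤ ((m : ℝ) + 1) * ((m : ℝ) + 2) := by push_cast; nlinarith
    calc ((m + 1 : ℕ) : ℝ) ^ 2 * (p * (1 - p) ^ m)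
        ≤ (((m : ℝ) + 1) * ((m : ℝ) + 2)) * (p * (1 - p) ^ m) := by
          apply mul_le_mul_of_nonneg_right this (by positivity)
      _ = p * (((m : ℝ) + 1) * ((m : ℝ) + 2) * (1 - p) ^ m) := by ring
  obtain ⟨hInt2, hE2⟩ := geom_aux μ X hX p hp0 hp1 h0 hpmf (fun k => (k : ℝ) ^ 2)
    (fun k => by positivity) hsq
  have hE2le : (∫ ω, ((X ω : ℝ)) ^ 2 ∂μ) ≤ 2 / p ^ 2 := by
    rw [hE2]
    have hts := tsum_sq_geom hq0 hq1
    rw [hpp] at hts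
    calc ∑' m : ℕ, ((m + 1 : ℕ) : ℝ) ^ 2 * (p * (1 - p) ^ m)
        ≤ ∑' m : ℕ, p * (((m : ℝ) + 1) * ((m : ℝ) + 2) * (1 - p) ^ m) := by
          apply Summable.tsum_le_tsum ?_ hsq ((summable_sq_geom hq0 hq1).mul_left p)
          intro m
          have : ((m + 1 : ℕ) : ℝ) ^ 2 ≤ ((m : ℝ) + 1) * ((m : ℝ) + 2) := by push_cast; nlinarith
          have hqm : (0 : ℝ) ≤ (1 - p) ^ m := pow_nonneg hq0 m
          calc ((m + 1 : ℕ) : ℝ) ^ 2 * (p * (1 - p) ^ m)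
              ≤ (((m : ℝ) + 1) * ((m : ℝ) + 2)) * (p * (1 - p) ^ m) :=
                mul_le_mul_of_nonneg_right this (by positivity)
            _ = p * (((m : ℝ) + 1) * ((m : ℝ) + 2) * (1 - p) ^ m) := by ring
      _ = p * (2 / p ^ 3) := by rw [tsum_mul_left, hts]
      _ = 2 / p ^ 2 := by field_simp
  -- MemLp
  have hmeasX : Measurable (fun ω => (X ω : ℝ)) := measurable_from_nat.comp hX
  have hMem : MemLp (fun ω => (X ω : ℝ)) 2 μ := by
    rw [memLp_two_iff_integrable_sq hmeasX.aestronglyMeasurable]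
    exact hInt2
  refine ⟨hMem, hE1, ?_⟩
  have hvar := variance_eq_sub hMem
  rw [hvar]
  have hpow : (μ[(fun ω => (X ω : ℝ)) ^ 2]) = ∫ ω, ((X ω : ℝ)) ^ 2 ∂μ := by
    congr 1
  have hE1' : (μ[fun ω => (X ω : ℝ)]) = 1 / p := hE1
  rw [hpow, hE1']
  have : (1 / p) ^ 2 = 1 / p ^ 2 := by field_simp
  rw [this]
  have h2 : 2 / p ^ 2 = 1 / p ^ 2 + 1 / p ^ 2 := by ring
  linarith [hE2le]


lemma sum_inv_sq_le (n : ℕ) :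
    ∑ i ∈ Finset.range n, (1 / ((i : ℝ) + 1)) ^ 2 ≤ 2 - 2 / ((n : ℝ) + 1) := by
  induction n with
  | zero => norm_num
  | succ n ih =>
    rw [Finset.sum_range_succ]
    have h1 : (0 : ℝ) < (n : ℝ) + 1 := by positivity
    have h2 : (0 : ℝ) < (n : ℝ) + 2 := by positivity
    have key : (1 / ((n : ℝ) + 1)) ^ 2 ≤ 2 / ((n : ℝ) + 1) - 2 / ((n : ℝ) + 2) := by
      rw [div_sub_div _ _ (ne_of_gt h1) (ne_of_gt h2), div_pow, div_le_div_iff₀ (by positivity) (by positivity)]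
      ring_nf
      nlinarith [sq_nonneg ((n:ℝ)+1)]
    push_cast
    have h3 : (n : ℝ) + 1 + 1 = (n : ℝ) + 2 := by ring
    rw [h3]
    linarith

lemma harmonic_real (n : ℕ) :
    ∑ i ∈ Finset.range n, 1 / ((i : ℝ) + 1) = ((harmonic n : ℚ) : ℝ) := by
  rw [harmonic]
  push_cast
  simp [one_div]

lemma main_bound {Ωt : Type} [MeasurableSpace Ωt] (μ : Measure Ωt) [IsProbabilityMeasure μ]
    (n : ℕ) (hn : 1 ≤ n) (G : Fin n → Ωt → ℕ)
    (hmeas : ∀ j : Fin n, Measurable (G j))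
    (hindep : iIndepFun G μ)
    (hdist : ∀ (j : Fin n), ∀ k : ℕ, 1 ≤ k →
      μ {ω | G j ω = k} =
        ENNReal.ofReal ((((n : ℝ) - j) / n) * (1 - ((n : ℝ) - j) / n) ^ (k - 1)))
    (hzero : ∀ j : Fin n, μ {ω | G j ω = 0} = 0)
    (ε : ℝ) (hε0 : 0 < ε) (hεL : 1 < ε * Real.log n) :
    μ {ω | (1 - ε) * n * Real.log n ≤ ((∑ j, G j ω : ℕ) : ℝ) ∧
        ((∑ j, G j ω : ℕ) : ℝ) ≤ (1 + ε) * n * Real.log n}ᶜ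
      ≤ ENNReal.ofReal (2 / (ε * Real.log n - 1) ^ 2) := by
  have hn0 : (0 : ℝ) < n := by exact_mod_cast hn
  set L : ℝ := Real.log n with hLdef
  have hL0 : 0 ≤ L := Real.log_nonneg (by exact_mod_cast hn)
  set X : Fin n → Ωt → ℝ := fun j ω => (G j ω : ℝ) with hX
  set p : Fin n → ℝ := fun j => ((n : ℝ) - j) / n with hp
  have hp0 : ∀ j, 0 < p j := by
    intro j
    apply div_pos _ hn0
    have : ((j : ℕ) : ℝ) < n := by exact_mod_cast j.isLt
    linarith
  have hp1 : ∀ j, p j ≤ 1 := by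
    intro j
    rw [hp, div_le_one hn0]
    have : (0 : ℝ) ≤ ((j : ℕ) : ℝ) := Nat.cast_nonneg _
    linarith
  have moments : ∀ j, MemLp (X j) 2 μ ∧ (∫ ω, X j ω ∂μ) = 1 / p j ∧
      variance (X j) μ ≤ 1 / p j ^ 2 := by
    intro j
    exact geom_moments μ (G j) (hmeas j) (p j) (hp0 j) (hp1 j) (hzero j) (hdist j)
  have hMem := fun j => (moments j).1
  have hE := fun j => (moments j).2.1
  have hV := fun j => (moments j).2.2
  set τ : Ωt → ℝ := fun ω => ∑ j, X j ω with hτ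
  have hMemτ : MemLp τ 2 μ := memLp_finset_sum Finset.univ (fun j _ => hMem j)
  -- key sum identity
  have hinv : ∀ j : Fin n, 1 / p j = (n : ℝ) * (1 / ((n : ℝ) - j)) := by
    intro j
    rw [hp]
    simp only
    rw [one_div_div]
    ring
  have hreflect : ∀ f : ℝ → ℝ, ∑ j : Fin n, f ((n : ℝ) - j)
      = ∑ i ∈ Finset.range n, f ((i : ℝ) + 1) := by
    intro f
    rw [Fin.sum_univ_eq_sum_range (fun i : ℕ => f ((n : ℝ) - i)), ← Finset.sum_range_reflect]
    apply Finset.sum_congr rfl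
    intro i hi
    rw [Finset.mem_range] at hi
    congr 1
    have h1 : i ≤ n - 1 := Nat.le_sub_one_of_lt hi
    rw [Nat.cast_sub h1, Nat.cast_sub (by omega : 1 ≤ n)]
    push_cast
    ring
  -- expectation
  have hEτ : (∫ ω, τ ω ∂μ) = (n : ℝ) * ∑ i ∈ Finset.range n, 1 / ((i : ℝ) + 1) := by
    rw [hτ]
    rw [integral_finset_sum Finset.univ (fun j _ => (hMem j).integrable one_le_two)]
    rw [Finset.sum_congr rfl (fun j _ => (hE j).trans (hinv j)),
      ← Finset.mul_sum]
    congr 1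
    exact hreflect (fun x => 1 / x)
  have hHl : L ≤ ∑ i ∈ Finset.range n, 1 / ((i : ℝ) + 1) := by
    rw [harmonic_real]
    calc L ≤ Real.log ((n : ℝ) + 1) := by
          apply Real.log_le_log hn0; linarith
      _ ≤ ((harmonic n : ℚ) : ℝ) := by
          have := log_add_one_le_harmonic n
          push_cast at this ⊢
          exact this
  have hHu : ∑ i ∈ Finset.range n, 1 / ((i : ℝ) + 1) ≤ 1 + L := by
    rw [harmonic_real]
    exact harmonic_le_one_add_log n
  have hEl : (n : ℝ) * L ≤ ∫ ω, τ ω ∂μ := by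
    rw [hEτ]
    apply mul_le_mul_of_nonneg_left hHl hn0.le
  have hEu : (∫ ω, τ ω ∂μ) ≤ (n : ℝ) * (1 + L) := by
    rw [hEτ]
    apply mul_le_mul_of_nonneg_left hHu hn0.le
  -- variance
  have hVτ : variance τ μ ≤ 2 * (n : ℝ) ^ 2 := by
    have hfun : τ = ∑ j, X j := by
      funext ω
      rw [hτ]
      simp [Finset.sum_apply]
    have hpair : Set.Pairwise ↑(Finset.univ : Finset (Fin n))
        fun i j => IndepFun (X i) (X j) μ := by
      intro i _ j _ hij
      exact (hindep.indepFun hij).comp measurable_from_nat measurable_from_nat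
    rw [hfun, IndepFun.variance_sum (fun j _ => hMem j) hpair]
    calc ∑ j, variance (X j) μ ≤ ∑ j : Fin n, 1 / p j ^ 2 := Finset.sum_le_sum fun j _ => hV j
      _ = (n : ℝ) ^ 2 * ∑ i ∈ Finset.range n, (1 / ((i : ℝ) + 1)) ^ 2 := by
          rw [Finset.mul_sum]
          have : ∀ j : Fin n, 1 / p j ^ 2 = (n : ℝ) ^ 2 * (1 / ((n : ℝ) - j)) ^ 2 := by
            intro j
            rw [hp]
            simp only
            rw [div_pow, one_div_div, div_pow]
            ring
          rw [Finset.sum_congr rfl fun j _ => this j]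
          have h2 := hreflect (fun x => (n : ℝ) ^ 2 * (1 / x) ^ 2)
          rw [← Finset.mul_sum, ← Finset.mul_sum] at h2 ⊢
          exact h2
      _ ≤ (n : ℝ) ^ 2 * 2 := by
          apply mul_le_mul_of_nonneg_left _ (by positivity)
          calc ∑ i ∈ Finset.range n, (1 / ((i : ℝ) + 1)) ^ 2 ≤ 2 - 2 / ((n : ℝ) + 1) :=
                sum_inv_sq_le n
            _ ≤ 2 := by
                have : 0 < (n : ℝ) + 1 := by positivity
                have : 0 ≤ 2 / ((n : ℝ) + 1) := by positivity
                linarith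
      _ = 2 * (n : ℝ) ^ 2 := by ring
  -- Chebyshev
  set c : ℝ := (n : ℝ) * (ε * L - 1) with hc
  have hc0 : 0 < c := by
    apply mul_pos hn0
    linarith
  have hcheb := meas_ge_le_variance_div_sq hMemτ hc0
  have hsub : {ω | (1 - ε) * n * L ≤ ((∑ j, G j ω : ℕ) : ℝ) ∧
      ((∑ j, G j ω : ℕ) : ℝ) ≤ (1 + ε) * n * L}ᶜ ⊆ {ω | c ≤ |τ ω - μ[τ]|} := by
    intro ω hω
    simp only [Set.mem_compl_iff, Set.mem_setOf_eq, not_and_or, not_le] at hω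
    have hτω : ((∑ j, G j ω : ℕ) : ℝ) = τ ω := by
      rw [hτ, hX]
      push_cast
      rfl
    rw [hτω] at hω
    simp only [Set.mem_setOf_eq]
    rcases hω with hlt | hgt
    · have h1 : c ≤ μ[τ] - τ ω := by nlinarith [hEl]
      calc c ≤ μ[τ] - τ ω := h1
        _ = -(τ ω - μ[τ]) := by ring
        _ ≤ |τ ω - μ[τ]| := neg_le_abs _
    · have h1 : c ≤ τ ω - μ[τ] := by nlinarith [hEu]
      exact h1.trans (le_abs_self _)
  calc μ _ ≤ μ {ω | c ≤ |τ ω - μ[τ]|} := measure_mono hsub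
    _ ≤ ENNReal.ofReal (variance τ μ / c ^ 2) := hcheb
    _ ≤ ENNReal.ofReal (2 / (ε * L - 1) ^ 2) := by
        apply ENNReal.ofReal_le_ofReal
        have hc2 : (0 : ℝ) < c ^ 2 := by positivity
        have he1 : (0 : ℝ) < ε * L - 1 := by linarith
        calc variance τ μ / c ^ 2 ≤ 2 * (n : ℝ) ^ 2 / c ^ 2 := by gcongr
          _ = 2 / (ε * L - 1) ^ 2 := by
              rw [hc]
              field_simp

/-- Coupon collector's problem: τ = Σ_{j=0}^{n-1} G_j with G_j independent geometric
on {1,2,...} with success probability (n-j)/n.  For any ε ∈ (0,1),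
P((1-ε) n log n ≤ τ ≤ (1+ε) n log n) → 1. -/
theorem coupon_collector_concentration
    (Ω : ℕ → Type) [∀ n, MeasurableSpace (Ω n)]
    (μ : ∀ n, Measure (Ω n)) [∀ n, IsProbabilityMeasure (μ n)]
    (G : ∀ n, Fin n → Ω n → ℕ)
    (hmeas : ∀ n (j : Fin n), Measurable (G n j))
    (hindep : ∀ n, iIndepFun (G n) (μ n))
    (hdist : ∀ n (j : Fin n), ∀ k : ℕ, 1 ≤ k →
      μ n {ω | G n j ω = k} =
        ENNReal.ofReal ((((n : ℝ) - j) / n) * (1 - ((n : ℝ) - j) / n) ^ (k - 1)))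
    (hzero : ∀ n (j : Fin n), μ n {ω | G n j ω = 0} = 0)
    (ε : ℝ) (hε : ε ∈ Set.Ioo (0 : ℝ) 1) :
    Tendsto (fun n => μ n {ω |
        (1 - ε) * n * Real.log n ≤ ((∑ j, G n j ω : ℕ) : ℝ) ∧
        ((∑ j, G n j ω : ℕ) : ℝ) ≤ (1 + ε) * n * Real.log n})
      atTop (nhds 1) := by
  obtain ⟨hε0, hε1⟩ := hε
  set A : ∀ n : ℕ, Set (Ω n) := fun n => {ω |
      (1 - ε) * n * Real.log n ≤ ((∑ j, G n j ω : ℕ) : ℝ) ∧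
      ((∑ j, G n j ω : ℕ) : ℝ) ≤ (1 + ε) * n * Real.log n} with hA
  have hAmeas : ∀ n, MeasurableSet (A n) := by
    intro n
    have hτm : Measurable fun ω => ((∑ j, G n j ω : ℕ) : ℝ) :=
      measurable_from_nat.comp (Finset.measurable_sum Finset.univ (fun j _ => hmeas n j))
    have : A n = {ω | (1 - ε) * n * Real.log n ≤ ((∑ j, G n j ω : ℕ) : ℝ)}
        ∩ {ω | ((∑ j, G n j ω : ℕ) : ℝ) ≤ (1 + ε) * n * Real.log n} := rfl
    rw [this]
    exact (measurableSet_le measurable_const hτm).inter (measurableSet_le hτm measurable_const)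
  have hlog : Tendsto (fun n : ℕ => ε * Real.log n) atTop atTop :=
    (Real.tendsto_log_atTop.comp tendsto_natCast_atTop_atTop).const_mul_atTop hε0
  have hbound : ∀ᶠ n : ℕ in atTop,
      μ n (A n)ᶜ ≤ ENNReal.ofReal (2 / (ε * Real.log n - 1) ^ 2) := by
    filter_upwards [eventually_ge_atTop 1, hlog.eventually_gt_atTop 1] with n hn hεL
    exact main_bound (μ n) n hn (G n) (hmeas n) (hindep n) (hdist n) (hzero n) ε hε0 hεL
  have hg : Tendsto (fun n : ℕ => 2 / (ε * Real.log n - 1) ^ 2) atTop (nhds 0) := by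
    apply Tendsto.div_atTop tendsto_const_nhds
    have h1 : Tendsto (fun n : ℕ => ε * Real.log n - 1) atTop atTop := by
      simpa [sub_eq_add_neg] using tendsto_atTop_add_const_right atTop (-1 : ℝ) hlog
    exact (tendsto_pow_atTop (two_ne_zero)).comp h1
  have hcompl : Tendsto (fun n => μ n (A n)ᶜ) atTop (nhds 0) := by
    apply tendsto_of_tendsto_of_tendsto_of_le_of_le'
      (tendsto_const_nhds (x := (0 : ENNReal)))
      (show Tendsto (fun n : ℕ => ENNReal.ofReal (2 / (ε * Real.log n - 1) ^ 2)) atTop (nhds 0) by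
        simpa using ENNReal.tendsto_ofReal hg)
      (Eventually.of_forall fun n => zero_le) hbound
  have hrw : ∀ n, μ n (A n) = 1 - μ n (A n)ᶜ := by
    intro n
    rw [prob_compl_eq_one_sub (hAmeas n), ENNReal.sub_sub_cancel ENNReal.one_ne_top prob_le_one]
  refine (tendsto_congr hrw).mpr ?_
  have hcont := (ENNReal.continuous_sub_left ENNReal.one_ne_top).continuousAt (x := (0 : ENNReal))
  have := hcont.tendsto.comp hcompl
  simpa [Function.comp_def] using this
end

section
/- In the coupon collector's problem with n coupons, for any ε ∈ (0,1), the probability that the number τ_{⌈(1-ε)n⌉} of draws needed to obtain ⌈(1-ε)n⌉ distinct coupons is at most 2((1-ε)/ε)·n tends to 1 as n → ∞. -/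
open MeasureTheory ProbabilityTheory Filter

/-!
Write the coupon time as a sum of `m = ⌈(1 - ε) n⌉` independent geometric variables whose success
probabilities `(n - j) / n` all exceed `ε`. The factorial moments `E[C(G + r, r + 1)] = p^{-(r+1)}`
of a geometric variable (a negative binomial series) give `E G = 1/p` and `Var G = (1 - p)/p²`,
so the sum has mean at most `m/ε ≈ (1 - ε) n/ε` and variance at most `m/ε²`. The threshold
`2 (1 - ε) n/ε` lies about `(1 - ε) n/ε` above the mean, so Chebyshev's inequality bounds the
probability of exceeding it by `O(1/n)`.
-/

section NatValued

variable {Ω : Type*} [MeasurableSpace Ω] {μ : Measure Ω} {g : Ω → ℕ}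

lemma measureReal_map_singleton (hg : Measurable g) (k : ℕ) :
    (μ.map g).real {k} = μ.real {ω | g ω = k} := by
  rw [map_measureReal_apply hg (measurableSet_singleton k)]; rfl

variable [IsFiniteMeasure μ]

lemma integrable_comp_of_summable (hg : Measurable g) {f : ℕ → ℝ}
    (hf : Summable fun k => μ.real {ω | g ω = k} * ‖f k‖) :
    Integrable (fun ω => f (g ω)) μ := by
  refine (integrable_map_measure (by fun_prop) hg.aemeasurable).1 ?_
  rw [← Measure.sum_smul_dirac (μ.map g), integrable_sum_dirac_iff (fun _ => measure_ne_top _ _)]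
  simpa [← measureReal_def, measureReal_map_singleton hg] using hf

lemma integral_comp_eq_tsum (hg : Measurable g) {f : ℕ → ℝ}
    (hf : Summable fun k => μ.real {ω | g ω = k} * ‖f k‖) :
    ∫ ω, f (g ω) ∂μ = ∑' k, μ.real {ω | g ω = k} * f k := by
  have hint : Integrable f (μ.map g) :=
    (integrable_map_measure (by fun_prop) hg.aemeasurable).2 (integrable_comp_of_summable hg hf)
  rw [← integral_map hg.aemeasurable (by fun_prop), integral_countable hint]
  simp [measureReal_map_singleton hg]

end NatValued

/-- Geometric law on `{1, 2, …}` (number of trials up to the first success), unlike Mathlib's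
`geometricMeasure`, which counts failures. -/
def HasGeometricLaw {Ω : Type*} [MeasurableSpace Ω] (μ : Measure Ω) (g : Ω → ℕ) (p : ℝ) : Prop :=
  ∀ k, 1 ≤ k → μ {ω | g ω = k} = ENNReal.ofReal (p * (1 - p) ^ (k - 1))

namespace HasGeometricLaw

variable {Ω : Type*} [MeasurableSpace Ω] {μ : Measure Ω} {g : Ω → ℕ} {p : ℝ}

lemma hasSum_choose (hlaw : HasGeometricLaw μ g p) (hp0 : 0 < p) (hp1 : p ≤ 1) (r : ℕ) :
    HasSum (fun k => μ.real {ω | g ω = k} * (k + r).choose (r + 1)) (1 / p ^ (r + 1)) := by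
  have hq : ‖1 - p‖ < 1 := by rw [Real.norm_eq_abs, abs_lt]; constructor <;> linarith
  have hsum := (hasSum_choose_mul_geometric_of_norm_lt_one (r + 1) hq).mul_left p
  have hterm : ∀ k : ℕ, μ.real {ω | g ω = k + 1} * ((k + 1 + r).choose (r + 1) : ℝ)
      = p * ((k + (r + 1)).choose (r + 1) * (1 - p) ^ k) := by
    intro k
    rw [measureReal_def, hlaw (k + 1) (by omega),
      ENNReal.toReal_ofReal (mul_nonneg hp0.le (pow_nonneg (by linarith) _)),
      Nat.add_sub_cancel, Nat.add_right_comm, add_assoc]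
    ring
  have hval : p * (1 / (1 - (1 - p)) ^ (r + 1 + 1)) = 1 / p ^ (r + 1) := by
    rw [sub_sub_cancel, pow_succ]
    field_simp
  rw [hval] at hsum
  rw [← hasSum_nat_add_iff' 1]
  simpa [hterm] using hsum

lemma integrable_choose [IsFiniteMeasure μ] (hlaw : HasGeometricLaw μ g p) (hg : Measurable g)
    (hp0 : 0 < p) (hp1 : p ≤ 1) (r : ℕ) :
    Integrable (fun ω => ((g ω + r).choose (r + 1) : ℝ)) μ :=
  integrable_comp_of_summable hg (f := fun k => ((k + r).choose (r + 1) : ℝ))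
    (by simpa using (hlaw.hasSum_choose hp0 hp1 r).summable)

lemma integral_choose [IsFiniteMeasure μ] (hlaw : HasGeometricLaw μ g p) (hg : Measurable g)
    (hp0 : 0 < p) (hp1 : p ≤ 1) (r : ℕ) :
    ∫ ω, ((g ω + r).choose (r + 1) : ℝ) ∂μ = 1 / p ^ (r + 1) := by
  rw [integral_comp_eq_tsum hg (f := fun k => ((k + r).choose (r + 1) : ℝ))
    (by simpa using (hlaw.hasSum_choose hp0 hp1 r).summable)]
  exact (hlaw.hasSum_choose hp0 hp1 r).tsum_eq

lemma integral_eq [IsFiniteMeasure μ] (hlaw : HasGeometricLaw μ g p) (hg : Measurable g)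
    (hp0 : 0 < p) (hp1 : p ≤ 1) : ∫ ω, (g ω : ℝ) ∂μ = 1 / p := by
  simpa using hlaw.integral_choose hg hp0 hp1 0

lemma memLp_two [IsFiniteMeasure μ] (hlaw : HasGeometricLaw μ g p) (hg : Measurable g)
    (hp0 : 0 < p) (hp1 : p ≤ 1) : MemLp (fun ω => (g ω : ℝ)) 2 μ := by
  have hmeas : AEStronglyMeasurable (fun ω => (g ω : ℝ)) μ := by fun_prop
  refine (memLp_two_iff_integrable_sq hmeas).2 <|
    ((hlaw.integrable_choose hg hp0 hp1 1).const_mul 2).mono' (by fun_prop) ?_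
  refine Eventually.of_forall fun ω => ?_
  rw [Real.norm_eq_abs, abs_pow, sq_abs, Nat.cast_choose_two]
  push_cast
  nlinarith [(Nat.cast_nonneg (g ω) : (0 : ℝ) ≤ g ω)]

lemma variance_eq [IsProbabilityMeasure μ] (hlaw : HasGeometricLaw μ g p) (hg : Measurable g)
    (hp0 : 0 < p) (hp1 : p ≤ 1) : variance (fun ω => (g ω : ℝ)) μ = (1 - p) / p ^ 2 := by
  have hsq : (fun ω => (g ω : ℝ)) ^ 2
      = fun ω => 2 * ((g ω + 1).choose 2 : ℝ) - g ω := by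
    ext ω; rw [Pi.pow_apply, Nat.cast_choose_two]; push_cast; ring
  rw [variance_eq_sub (hlaw.memLp_two hg hp0 hp1), hsq,
    integral_sub ((hlaw.integrable_choose hg hp0 hp1 1).const_mul 2)
      ((hlaw.memLp_two hg hp0 hp1).integrable one_le_two),
    integral_const_mul, hlaw.integral_choose hg hp0 hp1 1, hlaw.integral_eq hg hp0 hp1]
  field_simp
  ring

end HasGeometricLaw

section Chebyshev

variable {Ω : Type*} [MeasurableSpace Ω] {μ : Measure Ω} [IsProbabilityMeasure μ]

lemma measure_sum_gt_le_of_iIndepFun {ι : Type*} [Fintype ι] {X : ι → Ω → ℝ}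
    (hX : ∀ i, MemLp (X i) 2 μ) (hind : iIndepFun X μ) {c t : ℝ} (hc : 0 < c)
    (ht : ∑ i, μ[X i] + c ≤ t) :
    μ {ω | t < ∑ i, X i ω} ≤ ENNReal.ofReal ((∑ i, variance (X i) μ) / c ^ 2) := by
  have hS : MemLp (∑ i, X i) 2 μ := memLp_finsetSum' _ fun i _ => hX i
  have hmean : μ[∑ i, X i] = ∑ i, μ[X i] := by
    simpa only [Finset.sum_apply] using
      integral_finsetSum _ fun i _ => (hX i).integrable one_le_two
  have hvar : variance (∑ i, X i) μ = ∑ i, variance (X i) μ :=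
    IndepFun.variance_sum (fun i _ => hX i) fun i _ j _ hij => hind.indepFun hij
  calc μ {ω | t < ∑ i, X i ω}
      ≤ μ {ω | c ≤ |(∑ i, X i) ω - μ[∑ i, X i]|} := by
        refine measure_mono fun ω (hω : t < ∑ i, X i ω) => ?_
        rw [Set.mem_ofPred_eq, hmean, Finset.sum_apply]
        exact le_abs.2 (Or.inl (by linarith))
    _ ≤ ENNReal.ofReal ((∑ i, variance (X i) μ) / c ^ 2) :=
        hvar ▸ meas_ge_le_variance_div_sq hS hc

lemma measure_sum_gt_le_of_hasGeometricLaw {ι : Type*} [Fintype ι] {G : ι → Ω → ℕ}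
    {p : ι → ℝ} {ε c : ℝ} (hmeas : ∀ i, Measurable (G i)) (hind : iIndepFun G μ)
    (hlaw : ∀ i, HasGeometricLaw μ (G i) (p i)) (hε : 0 < ε) (hp : ∀ i, ε ≤ p i)
    (hp1 : ∀ i, p i ≤ 1) (hc : 0 < c) :
    μ {ω | Fintype.card ι / ε + c < ∑ i, (G i ω : ℝ)}
      ≤ ENNReal.ofReal (Fintype.card ι / (ε * c) ^ 2) := by
  have hp0 : ∀ i, 0 < p i := fun i => hε.trans_le (hp i)
  have hmean : ∑ i, μ[fun ω => (G i ω : ℝ)] ≤ Fintype.card ι / ε := by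
    calc ∑ i, μ[fun ω => (G i ω : ℝ)] = ∑ i, 1 / p i :=
          Finset.sum_congr rfl fun i _ => (hlaw i).integral_eq (hmeas i) (hp0 i) (hp1 i)
      _ ≤ ∑ _i : ι, 1 / ε := Finset.sum_le_sum fun i _ => one_div_le_one_div_of_le hε (hp i)
      _ = Fintype.card ι / ε := by simp [div_eq_mul_inv]
  have hvar : ∑ i, variance (fun ω => (G i ω : ℝ)) μ ≤ Fintype.card ι / ε ^ 2 := by
    calc ∑ i, variance (fun ω => (G i ω : ℝ)) μ = ∑ i, (1 - p i) / p i ^ 2 :=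
          Finset.sum_congr rfl fun i _ => (hlaw i).variance_eq (hmeas i) (hp0 i) (hp1 i)
      _ ≤ ∑ _i : ι, 1 / ε ^ 2 := Finset.sum_le_sum fun i _ => by
          gcongr
          · linarith [hp0 i]
          · exact hp i
      _ = Fintype.card ι / ε ^ 2 := by simp [div_eq_mul_inv]
  refine (measure_sum_gt_le_of_iIndepFun (fun i => (hlaw i).memLp_two (hmeas i) (hp0 i) (hp1 i))
    (hind.comp (fun _ k => (k : ℝ)) fun _ => measurable_from_top) hc
    (by linarith)).trans (ENNReal.ofReal_le_ofReal ?_)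
  calc (∑ i, variance (fun ω => (G i ω : ℝ)) μ) / c ^ 2 ≤ Fintype.card ι / ε ^ 2 / c ^ 2 := by
        gcongr
    _ = Fintype.card ι / (ε * c) ^ 2 := by rw [mul_pow, div_div]

end Chebyshev

section CouponCollector

variable {Ω : Type*} [MeasurableSpace Ω] {μ : Measure Ω} [IsProbabilityMeasure μ]

lemma measure_couponTime_gt_le {ε : ℝ} (hε : ε ∈ Set.Ioo (0 : ℝ) 1) {n : ℕ}
    (hn : 2 ≤ (1 - ε) * n) {G : Fin ⌈(1 - ε) * (n : ℝ)⌉₊ → Ω → ℕ}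
    (hmeas : ∀ j, Measurable (G j)) (hind : iIndepFun G μ)
    (hlaw : ∀ j, HasGeometricLaw μ (G j) (((n : ℝ) - j) / n)) :
    μ {ω | 2 * ((1 - ε) / ε) * n < ∑ j, (G j ω : ℝ)} ≤ ENNReal.ofReal (6 / ((1 - ε) * n)) := by
  obtain ⟨hε0, hε1⟩ := hε
  have hn0 : (0 : ℝ) < n := by nlinarith
  have hp : ∀ j : Fin ⌈(1 - ε) * (n : ℝ)⌉₊, ε ≤ ((n : ℝ) - j) / n ∧ ((n : ℝ) - j) / n ≤ 1 := by
    intro j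
    have hj : (j : ℝ) < (1 - ε) * n := Nat.lt_ceil.1 j.isLt
    rw [le_div_iff₀ hn0, div_le_one hn0]
    constructor <;> nlinarith [(Nat.cast_nonneg j : (0 : ℝ) ≤ j)]
  have hcard : (⌈(1 - ε) * (n : ℝ)⌉₊ : ℝ) < (1 - ε) * n + 1 :=
    Nat.ceil_lt_add_one (by positivity)
  have htail := measure_sum_gt_le_of_hasGeometricLaw hmeas hind hlaw hε0 (fun j => (hp j).1)
    (fun j => (hp j).2) (c := (1 - ε) * n / (2 * ε)) (by positivity)
  rw [Fintype.card_fin] at htail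
  refine (measure_mono fun ω (hω : 2 * ((1 - ε) / ε) * n < ∑ j, (G j ω : ℝ)) => ?_).trans
    (htail.trans (ENNReal.ofReal_le_ofReal ?_))
  · refine lt_of_le_of_lt ?_ hω
    calc (⌈(1 - ε) * (n : ℝ)⌉₊ : ℝ) / ε + (1 - ε) * n / (2 * ε)
        ≤ ((1 - ε) * n + 1) / ε + (1 - ε) * n / (2 * ε) := by gcongr
      _ ≤ 2 * ((1 - ε) / ε) * n := by field_simp; nlinarith
  · calc (⌈(1 - ε) * (n : ℝ)⌉₊ : ℝ) / (ε * ((1 - ε) * n / (2 * ε))) ^ 2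
        = 4 * ⌈(1 - ε) * (n : ℝ)⌉₊ / ((1 - ε) * n) ^ 2 := by field_simp; ring
      _ ≤ 4 * ((1 - ε) * n + 1) / ((1 - ε) * n) ^ 2 := by gcongr
      _ ≤ 6 / ((1 - ε) * n) := by
        rw [div_le_div_iff₀ (by positivity) (by positivity)]; nlinarith

end CouponCollector

lemma tendsto_measure_nhds_one_of_compl {ι : Type*} {l : Filter ι} {Ω : ι → Type*}
    [∀ i, MeasurableSpace (Ω i)] {μ : ∀ i, Measure (Ω i)} [∀ i, IsProbabilityMeasure (μ i)]
    {A : ∀ i, Set (Ω i)} (h : Tendsto (fun i => μ i (A i)ᶜ) l (nhds 0)) :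
    Tendsto (fun i => μ i (A i)) l (nhds 1) := by
  have hlow : Tendsto (fun i => 1 - μ i (A i)ᶜ) l (nhds 1) := by
    simpa using ENNReal.Tendsto.sub tendsto_const_nhds h (Or.inl ENNReal.one_ne_top)
  refine tendsto_of_tendsto_of_tendsto_of_le_of_le hlow tendsto_const_nhds (fun i => ?_)
    fun i => prob_le_one
  exact tsub_le_iff_right.2 (measure_univ (μ := μ i) ▸ measure_univ_le_add_compl (A i))

/-- Coupon collector: the time to obtain ⌈(1-ε)n⌉ distinct coupons, written as the sum
of independent geometric({1,2,...}) variables with success probabilities (n-j)/n for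
j = 0,...,⌈(1-ε)n⌉-1, is at most 2((1-ε)/ε)n with probability tending to 1. -/
theorem coupon_collector_partial
    (ε : ℝ) (hε : ε ∈ Set.Ioo (0 : ℝ) 1)
    (Ω : ℕ → Type) [∀ n : ℕ, MeasurableSpace (Ω n)]
    (μ : ∀ n : ℕ, Measure (Ω n)) [∀ n : ℕ, IsProbabilityMeasure (μ n)]
    (G : ∀ n : ℕ, Fin (⌈(1 - ε) * (n : ℝ)⌉₊) → Ω n → ℕ)
    (hmeas : ∀ n j, Measurable (G n j))
    (hindep : ∀ n : ℕ, iIndepFun (G n) (μ n))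
    (hdist : ∀ (n : ℕ) (j : Fin (⌈(1 - ε) * (n : ℝ)⌉₊)), ∀ k : ℕ, 1 ≤ k →
      μ n {ω | G n j ω = k} =
        ENNReal.ofReal ((((n : ℝ) - j) / n) * (1 - ((n : ℝ) - j) / n) ^ (k - 1)))
    (hzero : ∀ (n : ℕ) (j : Fin (⌈(1 - ε) * (n : ℝ)⌉₊)), μ n {ω | G n j ω = 0} = 0) :
    Tendsto (fun n => μ n {ω |
        ((∑ j, G n j ω : ℕ) : ℝ) ≤ 2 * ((1 - ε) / ε) * n})
      atTop (nhds 1) := by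
  have h1ε : 0 < 1 - ε := by linarith [hε.2]
  have hlarge : ∀ᶠ n : ℕ in atTop, 2 ≤ (1 - ε) * n :=
    (tendsto_natCast_atTop_atTop.const_mul_atTop h1ε).eventually_ge_atTop 2
  have hrate : Tendsto (fun n : ℕ => ENNReal.ofReal (6 / ((1 - ε) * n))) atTop (nhds 0) := by
    simpa [div_div] using
      ENNReal.tendsto_ofReal (tendsto_const_div_atTop_nhds_zero_nat (6 / (1 - ε)))
  refine tendsto_measure_nhds_one_of_compl <| tendsto_of_tendsto_of_tendsto_of_le_of_le'
    tendsto_const_nhds hrate (Eventually.of_forall fun _ => zero_le) ?_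
  filter_upwards [hlarge] with n hn
  refine (measure_mono fun ω hω => ?_).trans
    (measure_couponTime_gt_le hε hn (hmeas n) (hindep n) (hdist n))
  simpa using hω
end
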